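/- arXiv:2604.25703 — 2 statements merged into one kernel-verified Lean document; each statement's English description precedes it below -/
import Mathlib

section
/- Let r : ℝ → ℂ be continuous with 1 − 2σ|r(k)|² > 0 for all real k (σ = ±1), with ln(1 − 2σ|r(·)|²) integrable on (−∞, −k₀] for a fixed k₀ > 0. Define δ(k) = exp( (1/(2πi)) ∫_{−∞}^{−k₀} ln(1 − 2σ|r(s)|²)/(s − k) ds ) for k ∈ ℂ ∖ (−∞, −k₀]. Then δ is holomorphic on ℂ ∖ (−∞, −k₀] and satisfies δ(k̄)̄ = δ(k)⁻¹ there. -/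
/-!
Split the real density `g = log (1 - 2σ|r|²)` into its positive and negative parts: each gives a
finite measure carried by the cut, and the Cauchy integral is the difference of their resolvent
(Stieltjes) transforms, which are holomorphic off the support. Since `g` is real, the Cauchy
integral commutes with conjugation of `k`, while conjugation flips the sign of `1 / (2πi)`;
hence `conj (δ (conj k)) = exp (-(…)) = (δ k)⁻¹`.
-/

open MeasureTheory Complex ComplexConjugate

section CauchyTransform

variable {μ : Measure ℝ} {g : ℝ → ℝ}

lemma resolvent_eq_inv_ofReal_sub (k : ℂ) (x : ℝ) : resolvent k x = ((x : ℂ) - k)⁻¹ := by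
  simp [resolvent, Ring.inverse_eq_inv']

lemma integral_toNNReal_smul_eq_resolventTransform (hg : Integrable g μ) {k : ℂ}
    (hk : k ∉ ofReal '' μ.support) :
    Integrable (fun x => (g x).toNNReal • ((x : ℂ) - k)⁻¹) μ ∧
      ∫ x, (g x).toNNReal • ((x : ℂ) - k)⁻¹ ∂μ =
        resolventTransform (μ.withDensity fun x => ENNReal.ofReal (g x)) k := by
  have := isFiniteMeasure_withDensity_ofReal hg.hasFiniteIntegral
  have hgm : AEMeasurable (fun x => (g x).toNNReal) μ :=
    hg.aemeasurable.real_toNNReal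
  have hk' : k ∉ algebraMap ℝ ℂ '' (μ.withDensity fun x => ENNReal.ofReal (g x)).support :=
    fun h => hk (Set.image_mono (withDensity_absolutelyContinuous μ _).support_mono h)
  have hint := integrable_resolvent hk'
  simp only [funext (resolvent_eq_inv_ofReal_sub k)] at hint
  refine ⟨(integrable_withDensity_iff_integrable_smul₀ hgm).1 hint, ?_⟩
  simp only [resolventTransform_apply, resolvent_eq_inv_ofReal_sub]
  exact (integral_withDensity_eq_integral_smul₀ hgm _).symm

lemma integral_div_sub_eq_sub_resolventTransform (hg : Integrable g μ) {k : ℂ}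
    (hk : k ∉ ofReal '' μ.support) :
    ∫ x, (g x : ℂ) / (x - k) ∂μ =
      resolventTransform (μ.withDensity fun x => ENNReal.ofReal (g x)) k -
        resolventTransform (μ.withDensity fun x => ENNReal.ofReal (-g x)) k := by
  obtain ⟨hpos, hpos_eq⟩ := integral_toNNReal_smul_eq_resolventTransform hg hk
  obtain ⟨hneg, hneg_eq⟩ :=
    integral_toNNReal_smul_eq_resolventTransform (g := fun x => -g x) hg.neg hk
  rw [← hpos_eq, ← hneg_eq, ← integral_sub hpos hneg]
  congr 1 with x
  simp only [NNReal.smul_def, Real.coe_toNNReal', real_smul, ← sub_mul, ← ofReal_sub,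
    max_zero_sub_max_neg_zero_eq_self, div_eq_mul_inv]

theorem differentiableOn_integral_div_sub (hg : Integrable g μ) :
    DifferentiableOn ℂ (fun k => ∫ x, (g x : ℂ) / (x - k) ∂μ) (ofReal '' μ.support)ᶜ := by
  have := isFiniteMeasure_withDensity_ofReal hg.hasFiniteIntegral
  have := isFiniteMeasure_withDensity_ofReal hg.neg.hasFiniteIntegral
  have hsupp (ρ : ℝ → ENNReal) :
      (ofReal '' μ.support)ᶜ ⊆ (algebraMap ℝ ℂ '' (μ.withDensity ρ).support)ᶜ :=
    Set.compl_subset_compl.2 <|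
      Set.image_mono (withDensity_absolutelyContinuous μ ρ).support_mono
  have hpos := analyticOn_resolventTransform
    (μ := μ.withDensity fun x => ENNReal.ofReal (g x))
  have hneg := analyticOn_resolventTransform
    (μ := μ.withDensity fun x => ENNReal.ofReal (-g x))
  exact ((hpos.mono (hsupp _)).sub (hneg.mono (hsupp _))).differentiableOn.congr
    fun k hk => integral_div_sub_eq_sub_resolventTransform hg hk

lemma conj_integral_div_sub_conj (g : ℝ → ℝ) (k : ℂ) :
    conj (∫ x, (g x : ℂ) / (x - conj k) ∂μ) = ∫ x, (g x : ℂ) / (x - k) ∂μ := by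
  rw [← integral_conj]
  simp

end CauchyTransform

lemma conj_one_div_two_pi_I : conj (1 / (2 * Real.pi * I)) = -(1 / (2 * Real.pi * I)) := by
  simp [map_ofNat]

theorem delta_holomorphic_and_symmetric_general (σ : ℝ)
    (k₀ : ℝ) (r : ℝ → ℂ)
    (hint : IntegrableOn (fun s => Real.log (1 - 2 * σ * ‖r s‖ ^ 2))
      (Set.Iic (-k₀)))
    (δ : ℂ → ℂ)
    (hδ : ∀ k : ℂ, δ k = Complex.exp ((1 / (2 * Real.pi * Complex.I)) *
      ∫ s in Set.Iic (-k₀),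
        (Real.log (1 - 2 * σ * ‖r s‖ ^ 2) : ℂ) / ((s : ℂ) - k))) :
    DifferentiableOn ℂ δ {k : ℂ | ¬(k.im = 0 ∧ k.re ≤ -k₀)} ∧
    ∀ k ∈ {k : ℂ | ¬(k.im = 0 ∧ k.re ≤ -k₀)},
      starRingEnd ℂ (δ (starRingEnd ℂ k)) = (δ k)⁻¹ := by
  have hcut : {k : ℂ | ¬(k.im = 0 ∧ k.re ≤ -k₀)} ⊆
      (ofReal '' (volume.restrict (Set.Iic (-k₀))).support)ᶜ := by
    rintro k hk ⟨x, hx, rfl⟩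
    exact hk ⟨ofReal_im x, by simpa using (Measure.support_restrict_subset hx).1⟩
  refine ⟨?_, fun k _ => ?_⟩
  · exact (((differentiableOn_integral_div_sub hint).mono hcut).const_mul _).cexp.congr
      fun k _ => hδ k
  · rw [hδ, hδ, ← exp_conj, map_mul, conj_one_div_two_pi_I, conj_integral_div_sub_conj,
      neg_mul, exp_neg]

/-- The Cauchy-integral function `δ` is holomorphic off the cut `(-∞, -k₀]` and
satisfies the conjugation symmetry `conj (δ (conj k)) = δ(k)⁻¹`. -/
theorem delta_holomorphic_and_symmetric (σ : ℝ) (hσ : σ = 1 ∨ σ = -1)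
    (k₀ : ℝ) (hk₀ : 0 < k₀) (r : ℝ → ℂ) (hr : Continuous r)
    (hpos : ∀ k : ℝ, 0 < 1 - 2 * σ * ‖r k‖ ^ 2)
    (hint : IntegrableOn (fun s => Real.log (1 - 2 * σ * ‖r s‖ ^ 2))
      (Set.Iic (-k₀)))
    (δ : ℂ → ℂ)
    (hδ : ∀ k : ℂ, δ k = Complex.exp ((1 / (2 * Real.pi * Complex.I)) *
      ∫ s in Set.Iic (-k₀),
        (Real.log (1 - 2 * σ * ‖r s‖ ^ 2) : ℂ) / ((s : ℂ) - k))) :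
    DifferentiableOn ℂ δ {k : ℂ | ¬(k.im = 0 ∧ k.re ≤ -k₀)} ∧
    ∀ k ∈ {k : ℂ | ¬(k.im = 0 ∧ k.re ≤ -k₀)},
      starRingEnd ℂ (δ (starRingEnd ℂ k)) = (δ k)⁻¹ :=
  delta_holomorphic_and_symmetric_general σ k₀ r hint δ hδ
end

section
/- Assume f : (−∞, −k₀] → ℝ is C¹ with f and f' integrable, and define χ(k) = (1/(2πi)) ∫_{−∞}^{−k₀} ln_π(k − s) f'(s) ds, where ln_π is the principal branch of the logarithm with argument in (−π, π). Then there is a constant C (independent of k) such that |χ(k) − χ(−k₀)| ≤ C |k + k₀| (1 + |ln|k + k₀||) for all k in the upper half-plane approaching −k₀ nontangentially with |k + k₀| ≤ 1/2. -/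
/-!
Put `ζ = k + k₀` and `w = -k₀ - s ≥ 0`; then `χ k - χ (-k₀)` is `(2πi)⁻¹` times the integral of
`(log (ζ + w) - log w) f'(s)`. For `w ≥ 2|ζ|` the kernel is `log (1 + ζ / w) = O(|ζ| / w)`. For
`w ≤ 2|ζ|` the nontangential condition `|ζ| ≤ c Im ζ` keeps `|ζ + w|` between `|ζ| / c` and
`3|ζ|`, so the kernel is `O(1 + |log |ζ|| + |log w|)`. Since `f'` is integrable on the tail
`w ≥ 1` and bounded on `w ≤ 1`, the three ranges `w ≥ 1`, `2|ζ| ≤ w ≤ 1` and `w ≤ 2|ζ|`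
contribute `O(|ζ|)`, `O(|ζ| log (1 / |ζ|))` and `O(|ζ| (1 + |log |ζ||))`.
-/

open MeasureTheory Set Real

lemma norm_integral_sub_integral_le {α E : Type*} [MeasurableSpace α] [NormedAddCommGroup E]
    [NormedSpace ℝ E] {μ : Measure α} {f g : α → E} (h : Integrable (fun x => f x - g x) μ) :
    ‖∫ x, f x ∂μ - ∫ x, g x ∂μ‖ ≤ ∫ x, ‖f x - g x‖ ∂μ := by
  by_cases hg : Integrable g μ
  · have hf : Integrable f μ := (h.add hg).congr (ae_of_all _ fun x => sub_add_cancel (f x) (g x))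
    rw [← integral_sub hf hg]
    exact norm_integral_le_integral_norm _
  · -- neither integral converges, so both are Lean's junk value `0`
    have hf : ¬Integrable f μ := fun hf =>
      hg ((hf.sub h).congr (ae_of_all _ fun x => sub_sub_cancel (f x) (g x)))
    rw [integral_undef hf, integral_undef hg, sub_zero, norm_zero]
    exact integral_nonneg fun _ => norm_nonneg _

lemma integral_abs_log_of_le_one {r : ℝ} (hr₀ : 0 ≤ r) (hr₁ : r ≤ 1) :
    ∫ t in (0 : ℝ)..r, |log t| = r - r * log r := by
  have hneg : EqOn (fun t => |log t|) (fun t => -log t) (uIcc 0 r) := by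
    intro t ht
    rw [uIcc_of_le hr₀] at ht
    exact abs_of_nonpos (log_nonpos ht.1 (ht.2.trans hr₁))
  rw [intervalIntegral.integral_congr hneg, intervalIntegral.integral_neg, integral_log]
  simp

lemma intervalIntegrable_abs_log_sub (a b c : ℝ) :
    IntervalIntegrable (fun s => |log (c - s)|) volume a b := by
  simpa using
    (intervalIntegral.intervalIntegrable_log' (a := c - a) (b := c - b)).abs.comp_sub_left c

lemma Complex.norm_log_le (z : ℂ) : ‖Complex.log z‖ ≤ |Real.log ‖z‖| + π := by
  refine (Complex.norm_le_abs_re_add_abs_im _).trans ?_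
  rw [Complex.log_re, Complex.log_im]
  exact add_le_add le_rfl (Complex.abs_arg_le_pi z)

lemma Complex.norm_log_ofReal {w : ℝ} (hw : 0 ≤ w) : ‖Complex.log w‖ = |Real.log w| := by
  rw [← Complex.ofReal_log hw, Complex.norm_real, Real.norm_eq_abs]

lemma Complex.norm_le_mul_im_of_abs_re_le {ζ : ℂ} {κ : ℝ} (hζ : 0 ≤ ζ.im)
    (h : |ζ.re| ≤ κ * ζ.im) : ‖ζ‖ ≤ (κ + 1) * ζ.im := by
  have := Complex.norm_le_abs_re_add_abs_im ζ
  rw [abs_of_nonneg hζ] at this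
  linarith

lemma Complex.one_le_of_norm_le_mul_im {ζ : ℂ} {c : ℝ} (hζ : 0 < ζ.im) (hc : ‖ζ‖ ≤ c * ζ.im) :
    1 ≤ c := by
  have := (le_abs_self ζ.im).trans (Complex.abs_im_le_norm ζ)
  nlinarith

lemma Complex.log_three_mul_nonneg_of_norm_le_mul_im {ζ : ℂ} {c : ℝ} (hζ : 0 < ζ.im)
    (hc : ‖ζ‖ ≤ c * ζ.im) : 0 ≤ Real.log (3 * c) :=
  Real.log_nonneg (by linarith [Complex.one_le_of_norm_le_mul_im hζ hc])

lemma Complex.norm_sub_ofReal_pos {z : ℂ} (a : ℝ) (hz : 0 < z.im) : 0 < ‖z - a‖ :=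
  norm_pos_iff.mpr fun h => by simp [sub_eq_zero.mp h] at hz

lemma Complex.norm_log_add_ofReal_sub_log_le {ζ : ℂ} {w : ℝ} (hw : 0 < w) (h : 2 * ‖ζ‖ ≤ w) :
    ‖Complex.log (ζ + w) - Complex.log w‖ ≤ 3 / 2 * (‖ζ‖ / w) := by
  have hnorm : ‖ζ / w‖ = ‖ζ‖ / w := by
    rw [norm_div, Complex.norm_real, Real.norm_eq_abs, abs_of_pos hw]
  have hhalf : ‖ζ / w‖ ≤ 1 / 2 := by
    rw [hnorm, div_le_iff₀ hw]; linarith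
  have hne : 1 + ζ / w ≠ 0 := by
    intro h0
    rw [← neg_eq_of_add_eq_zero_right h0, norm_neg, norm_one] at hhalf
    norm_num at hhalf
  have hfactor : ζ + w = (1 + ζ / w) * w := by
    field_simp [Complex.ofReal_ne_zero.mpr hw.ne']
    ring
  rw [hfactor, Complex.log_mul_ofReal w hw _ hne, ← Complex.ofReal_log hw.le, add_sub_cancel_left,
    ← hnorm]
  exact Complex.norm_log_one_add_half_le_self hhalf

lemma Complex.abs_log_norm_add_ofReal_le {ζ : ℂ} {c w : ℝ} (hζ : 0 < ζ.im)
    (hc : ‖ζ‖ ≤ c * ζ.im) (hw₀ : 0 ≤ w) (hw : w ≤ 2 * ‖ζ‖) :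
    |Real.log ‖ζ + w‖| ≤ |Real.log ‖ζ‖| + Real.log (3 * c) := by
  have hc₁ := Complex.one_le_of_norm_le_mul_im hζ hc
  have hpos : 0 < ‖ζ‖ := norm_pos_iff.mpr fun h => by simp [h] at hζ
  have hlower : ‖ζ‖ / c ≤ ‖ζ + w‖ := by
    have him : (ζ + w).im = ζ.im := by simp
    calc ‖ζ‖ / c ≤ ζ.im := by rw [div_le_iff₀ (by linarith)]; linarith
      _ ≤ ‖ζ + w‖ := him ▸ (le_abs_self _).trans (Complex.abs_im_le_norm _)
  have hupper : ‖ζ + w‖ ≤ 3 * ‖ζ‖ := by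
    refine (norm_add_le _ _).trans ?_
    rw [Complex.norm_real, Real.norm_eq_abs, abs_of_nonneg hw₀]
    linarith
  have h₁ : Real.log ‖ζ‖ - Real.log c ≤ Real.log ‖ζ + w‖ := by
    rw [← Real.log_div hpos.ne' (by positivity)]
    exact Real.log_le_log (by positivity) hlower
  have h₂ : Real.log ‖ζ + w‖ ≤ Real.log 3 + Real.log ‖ζ‖ := by
    rw [← Real.log_mul (by norm_num) hpos.ne']
    exact Real.log_le_log ((div_pos hpos (by linarith)).trans_le hlower) hupper
  rw [Real.log_mul (by norm_num) (by positivity)]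
  have := Real.log_nonneg (show (1 : ℝ) ≤ 3 by norm_num)
  have := Real.log_nonneg hc₁
  rw [abs_le]
  constructor <;> linarith [le_abs_self (Real.log ‖ζ‖), neg_abs_le (Real.log ‖ζ‖)]

lemma Complex.norm_log_add_ofReal_sub_log_le_of_cone {ζ : ℂ} {c w : ℝ} (hζ : 0 < ζ.im)
    (hc : ‖ζ‖ ≤ c * ζ.im) (hw : 0 ≤ w) :
    ‖Complex.log (ζ + w) - Complex.log w‖ ≤
      |Real.log ‖ζ‖| + Real.log (3 * c) + π + |Real.log w| := by
  rcases le_or_gt w (2 * ‖ζ‖) with hnear | hfar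
  · refine (norm_sub_le _ _).trans ?_
    rw [Complex.norm_log_ofReal hw]
    gcongr
    exact (Complex.norm_log_le _).trans
      (by linarith [Complex.abs_log_norm_add_ofReal_le hζ hc hw hnear])
  · have hw₀ : 0 < w := by linarith [norm_nonneg ζ]
    have hratio : ‖ζ‖ / w ≤ 1 / 2 := by rw [div_le_iff₀ hw₀]; linarith
    have := Complex.log_three_mul_nonneg_of_norm_le_mul_im hζ hc
    calc _ ≤ 3 / 2 * (‖ζ‖ / w) := Complex.norm_log_add_ofReal_sub_log_le hw₀ hfar.le
      _ ≤ π := by linarith [pi_gt_three]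
      _ ≤ _ := by linarith [abs_nonneg (Real.log ‖ζ‖), abs_nonneg (Real.log w)]

lemma norm_log_sub_log_mul_eq (z : ℂ) (a s : ℝ) (g : ℝ → ℝ) :
    ‖(Complex.log (z - s) - Complex.log (a - s)) * g s‖ =
      ‖Complex.log ((z - a) + (a - s : ℝ)) - Complex.log (a - s : ℝ)‖ * |g s| := by
  have hz : z - s = (z - a) + (a - s : ℝ) := by push_cast; ring
  have ha : (a : ℂ) - s = (a - s : ℝ) := by push_cast; ring
  rw [norm_mul, Complex.norm_real, Real.norm_eq_abs, hz, ha]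

lemma norm_log_sub_log_mul_le_of_le_sub {z : ℂ} {a s : ℝ} (g : ℝ → ℝ) (hz : 0 < z.im)
    (hs : s ≤ a - 2 * ‖z - a‖) :
    ‖(Complex.log (z - s) - Complex.log (a - s)) * g s‖ ≤ 3 / 2 * (‖z - a‖ / (a - s)) * |g s| := by
  have hδ : 0 < ‖z - a‖ := Complex.norm_sub_ofReal_pos a hz
  rw [norm_log_sub_log_mul_eq]
  gcongr
  exact Complex.norm_log_add_ofReal_sub_log_le (by linarith) (by linarith)

lemma norm_log_sub_log_mul_le_of_le {z : ℂ} {a c s : ℝ} (g : ℝ → ℝ) (hz : 0 < z.im)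
    (hc : ‖z - a‖ ≤ c * z.im) (hs : s ≤ a) :
    ‖(Complex.log (z - s) - Complex.log (a - s)) * g s‖ ≤
      (|log ‖z - a‖| + log (3 * c) + π + |log (a - s)|) * |g s| := by
  rw [norm_log_sub_log_mul_eq]
  gcongr
  exact Complex.norm_log_add_ofReal_sub_log_le_of_cone (by simpa using hz) (by simpa using hc)
    (by linarith)

lemma aestronglyMeasurable_log_sub_log_mul {μ : Measure ℝ} (z : ℂ) (a : ℝ) {g : ℝ → ℝ}
    (hg : AEStronglyMeasurable g μ) :
    AEStronglyMeasurable (fun s : ℝ => (Complex.log (z - s) - Complex.log (a - s)) * g s) μ := by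
  refine AEStronglyMeasurable.mul ?_ (Complex.continuous_ofReal.comp_aestronglyMeasurable hg)
  exact (Complex.measurable_log.comp (by fun_prop)).sub
    (Complex.measurable_log.comp (by fun_prop)) |>.aestronglyMeasurable

lemma integrableOn_log_sub_log_mul {z : ℂ} {a c M : ℝ} {g : ℝ → ℝ}
    (hg : IntegrableOn g (Iic a)) (hM : ∀ s ∈ Icc (a - 1) a, |g s| ≤ M) (hz : 0 < z.im)
    (hc : ‖z - a‖ ≤ c * z.im) (hz₁ : ‖z - a‖ ≤ 1 / 2) :
    IntegrableOn (fun s : ℝ => (Complex.log (z - s) - Complex.log (a - s)) * g s) (Iic a) := by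
  have hδ : 0 < ‖z - a‖ := Complex.norm_sub_ofReal_pos a hz
  rw [← Iic_union_Ioc_eq_Iic (by linarith : a - 1 ≤ a)]
  refine IntegrableOn.union ?_ ?_
  · have hg₁ : IntegrableOn g (Iic (a - 1)) := hg.mono_set (Iic_subset_Iic.mpr (by linarith))
    refine Integrable.mono' (hg₁.abs.const_mul (3 / 4))
      (aestronglyMeasurable_log_sub_log_mul z a hg₁.1)
      (ae_restrict_of_forall_mem measurableSet_Iic fun s hs => ?_)
    have hs : s ≤ a - 1 := hs
    refine (norm_log_sub_log_mul_le_of_le_sub g hz (by linarith)).trans ?_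
    have : ‖z - a‖ / (a - s) ≤ 1 / 2 := by rw [div_le_iff₀ (by linarith)]; linarith
    gcongr
    linarith
  · refine Integrable.mono' (((integrableOn_const (C := |log ‖z - a‖| + log (3 * c) + π)
      measure_Ioc_lt_top.ne).add (intervalIntegrable_abs_log_sub (a - 1) a a).1).mul_const M)
      (aestronglyMeasurable_log_sub_log_mul z a (hg.mono_set Ioc_subset_Iic_self).1)
      (ae_restrict_of_forall_mem measurableSet_Ioc fun s hs => ?_)
    refine (norm_log_sub_log_mul_le_of_le g hz hc hs.2).trans ?_
    have := Complex.log_three_mul_nonneg_of_norm_le_mul_im (ζ := z - a) (by simpa using hz)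
      (by simpa using hc)
    exact mul_le_mul_of_nonneg_left (hM s (Ioc_subset_Icc_self hs))
      (by linarith [abs_nonneg (log ‖z - a‖), abs_nonneg (log (a - s)), pi_pos])

lemma integral_Iic_sub_one_norm_log_sub_log_mul_le {z : ℂ} {a : ℝ} {g : ℝ → ℝ}
    (hg : IntegrableOn g (Iic a)) (hz : 0 < z.im) (hz₁ : ‖z - a‖ ≤ 1 / 2) :
    ∫ s in Iic (a - 1), ‖(Complex.log (z - s) - Complex.log (a - s)) * g s‖ ≤
      3 / 2 * ‖z - a‖ * ∫ s in Iic a, |g s| := by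
  have hsub : Iic (a - 1) ⊆ Iic a := Iic_subset_Iic.mpr (by linarith)
  calc _ ≤ ∫ s in Iic (a - 1), 3 / 2 * ‖z - a‖ * |g s| := by
        refine integral_mono_of_nonneg (ae_of_all _ fun s => norm_nonneg _)
          ((hg.mono_set hsub).abs.const_mul _) (ae_restrict_of_forall_mem measurableSet_Iic ?_)
        intro s (hs : s ≤ a - 1)
        refine (norm_log_sub_log_mul_le_of_le_sub g hz (by linarith)).trans ?_
        dsimp only
        gcongr
        exact div_le_self (norm_nonneg _) (by linarith)
    _ ≤ 3 / 2 * ‖z - a‖ * ∫ s in Iic a, |g s| := by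
        rw [integral_const_mul]
        exact mul_le_mul_of_nonneg_left
          (setIntegral_mono_set hg.abs (ae_of_all _ fun s => abs_nonneg _) hsub.eventuallyLE)
          (by positivity)

lemma integral_Ioc_sub_one_norm_log_sub_log_mul_le {z : ℂ} {a M : ℝ} {g : ℝ → ℝ}
    (hM : ∀ s ∈ Icc (a - 1) a, |g s| ≤ M) (hz : 0 < z.im) (hz₁ : ‖z - a‖ ≤ 1 / 2) :
    ∫ s in Ioc (a - 1) (a - 2 * ‖z - a‖),
        ‖(Complex.log (z - s) - Complex.log (a - s)) * g s‖ ≤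
      3 / 2 * ‖z - a‖ * M * -log (2 * ‖z - a‖) := by
  set δ := ‖z - a‖
  have hδ : 0 < δ := Complex.norm_sub_ofReal_pos a hz
  have hle : a - 1 ≤ a - 2 * δ := by linarith
  have hinv : IntegrableOn (fun s => (a - s)⁻¹) (Ioc (a - 1) (a - 2 * δ)) := by
    refine (ContinuousOn.integrableOn_Icc ?_).mono_set Ioc_subset_Icc_self
    exact ContinuousOn.inv₀ (by fun_prop) fun s hs => (sub_pos.mpr (by linarith [hs.2])).ne'
  calc _ ≤ ∫ s in Ioc (a - 1) (a - 2 * δ), 3 / 2 * δ * M * (a - s)⁻¹ := by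
        refine integral_mono_of_nonneg (ae_of_all _ fun s => norm_nonneg _)
          (hinv.const_mul _) (ae_restrict_of_forall_mem measurableSet_Ioc ?_)
        intro s hs
        have hw : 0 < a - s := by linarith [hs.2]
        calc _ ≤ 3 / 2 * (δ / (a - s)) * |g s| := norm_log_sub_log_mul_le_of_le_sub g hz hs.2
          _ ≤ 3 / 2 * (δ / (a - s)) * M := by gcongr; exact hM s ⟨hs.1.le, by linarith⟩
          _ = 3 / 2 * δ * M * (a - s)⁻¹ := by ring
    _ = 3 / 2 * δ * M * -log (2 * δ) := by
        rw [integral_const_mul, ← intervalIntegral.integral_of_le hle,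
          intervalIntegral.integral_comp_sub_left (fun w => w⁻¹), integral_inv, sub_sub_cancel,
          sub_sub_cancel, one_div, log_inv]
        rw [uIcc_of_le (by linarith)]
        simp only [mem_Icc, not_and, not_le]
        intro h; linarith

lemma integral_Ioc_sub_two_mul_norm_log_sub_log_mul_le {z : ℂ} {a c M : ℝ} {g : ℝ → ℝ}
    (hM : ∀ s ∈ Icc (a - 1) a, |g s| ≤ M) (hz : 0 < z.im) (hc : ‖z - a‖ ≤ c * z.im)
    (hz₁ : ‖z - a‖ ≤ 1 / 2) :
    ∫ s in Ioc (a - 2 * ‖z - a‖) a, ‖(Complex.log (z - s) - Complex.log (a - s)) * g s‖ ≤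
      2 * ‖z - a‖ * M * (|log ‖z - a‖| + log (3 * c) + π + 1 - log (2 * ‖z - a‖)) := by
  set δ := ‖z - a‖
  set B := |log δ| + log (3 * c) + π
  have hδ : 0 ≤ δ := norm_nonneg _
  have hle : a - 2 * δ ≤ a := by linarith
  have hlog := intervalIntegrable_abs_log_sub (a - 2 * δ) a a
  have hB : 0 ≤ B := by
    have := Complex.log_three_mul_nonneg_of_norm_le_mul_im (ζ := z - a) (by simpa using hz)
      (by simpa using hc)
    positivity
  calc _ ≤ ∫ s in Ioc (a - 2 * δ) a, (B + |log (a - s)|) * M := by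
        refine integral_mono_of_nonneg (ae_of_all _ fun s => norm_nonneg _)
          (((intervalIntegrable_const.add hlog).mul_const M).1)
          (ae_restrict_of_forall_mem measurableSet_Ioc fun s hs => ?_)
        refine (norm_log_sub_log_mul_le_of_le g hz hc hs.2).trans ?_
        exact mul_le_mul_of_nonneg_left (hM s ⟨by linarith [hs.1], hs.2⟩) (by positivity)
    _ = 2 * δ * M * (B + 1 - log (2 * δ)) := by
        rw [integral_mul_const, ← intervalIntegral.integral_of_le hle,
          intervalIntegral.integral_add intervalIntegrable_const hlog,
          intervalIntegral.integral_comp_sub_left (fun w => |log w|), sub_self, sub_sub_cancel,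
          integral_abs_log_of_le_one (by positivity) (by linarith), intervalIntegral.integral_const,
          smul_eq_mul]
        ring

theorem integral_norm_log_sub_log_mul_le {z : ℂ} {a c M : ℝ} {g : ℝ → ℝ}
    (hg : IntegrableOn g (Iic a)) (hM : ∀ s ∈ Icc (a - 1) a, |g s| ≤ M) (hz : 0 < z.im)
    (hc : ‖z - a‖ ≤ c * z.im) (hz₁ : ‖z - a‖ ≤ 1 / 2) :
    ∫ s in Iic a, ‖(Complex.log (z - s) - Complex.log (a - s)) * g s‖ ≤
      (3 / 2 * (∫ s in Iic a, |g s|) + 2 * M * (3 + log (3 * c) + π)) * ‖z - a‖ *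
        (1 + |log ‖z - a‖|) := by
  set δ := ‖z - a‖
  have hF := (integrableOn_log_sub_log_mul hg hM hz hc hz₁).norm
  have hδ : 0 < δ := Complex.norm_sub_ofReal_pos a hz
  have hM₀ : 0 ≤ M := (abs_nonneg _).trans (hM a ⟨by linarith, le_rfl⟩)
  have hlog₃ := Complex.log_three_mul_nonneg_of_norm_le_mul_im (ζ := z - a) (by simpa using hz)
    (by simpa using hc)
  set L := ∫ s in Iic a, |g s|
  have hL : 0 ≤ L := integral_nonneg fun s => abs_nonneg _
  have hA : -log (2 * δ) ≤ |log δ| := by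
    rw [log_mul two_ne_zero hδ.ne']
    linarith [neg_abs_le (log δ), log_nonneg one_le_two]
  have hF' {t : Set ℝ} (ht : t ⊆ Iic a) := IntegrableOn.mono_set hF ht
  have hsplit₁ := setIntegral_union (Iic_disjoint_Ioc le_rfl) measurableSet_Ioc
    (hF' (Iic_subset_Iic.mpr (by linarith : a - 1 ≤ a))) (hF' Ioc_subset_Iic_self)
  have hsplit₂ := setIntegral_union (Ioc_disjoint_Ioc_of_le (a := a - 1) le_rfl) measurableSet_Ioc
    (hF' (Ioc_subset_Iic_self.trans (Iic_subset_Iic.mpr (by linarith : a - 2 * δ ≤ a))))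
    (hF' Ioc_subset_Iic_self)
  rw [Iic_union_Ioc_eq_Iic (by linarith)] at hsplit₁
  rw [Ioc_union_Ioc_eq_Ioc (by linarith) (by linarith)] at hsplit₂
  rw [hsplit₁, hsplit₂]
  have h₁ := integral_Iic_sub_one_norm_log_sub_log_mul_le hg hz hz₁
  have h₂ := integral_Ioc_sub_one_norm_log_sub_log_mul_le hM hz hz₁
  have h₃ := integral_Ioc_sub_two_mul_norm_log_sub_log_mul_le hM hz hc hz₁
  have hδM : 0 ≤ δ * M := by positivity
  have hA' := mul_le_mul_of_nonneg_left hA hδM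
  calc _ ≤ 3 / 2 * δ * L + δ * M * (11 / 2 * |log δ| + 2 * log (3 * c) + 2 * π + 2) := by
        nlinarith
    _ ≤ _ := by
        have hδMA := mul_nonneg hδM (abs_nonneg (log δ))
        linarith [mul_nonneg (mul_nonneg hδ.le hL) (abs_nonneg (log δ)),
          mul_nonneg hδMA (add_nonneg hlog₃ pi_pos.le)]

theorem chi_endpoint_estimate_general (k₀ : ℝ) (f : ℝ → ℝ)
    (hf : ContDiff ℝ 1 f)
    (hfi' : IntegrableOn (deriv f) (Set.Iic (-k₀)))
    (χ : ℂ → ℂ)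
    (hχ : ∀ k : ℂ, χ k = (1 / (2 * Real.pi * Complex.I)) *
      ∫ s in Set.Iic (-k₀), Complex.log (k - s) * ((deriv f s : ℝ) : ℂ)) :
    ∀ κ : ℝ, 0 < κ → ∃ C : ℝ, 0 < C ∧ ∀ k : ℂ, 0 < k.im →
      |k.re + k₀| ≤ κ * k.im → ‖k + k₀‖ ≤ 1 / 2 →
      ‖χ k - χ (-(k₀ : ℂ))‖ ≤
        C * ‖k + k₀‖ *
          (1 + |Real.log (‖k + k₀‖)|) := by
  intro κ _
  obtain ⟨M, hM⟩ := (isCompact_Icc (a := -k₀ - 1) (b := -k₀)).exists_bound_of_continuousOn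
    (hf.continuous_deriv le_rfl).continuousOn
  set C := 3 / 2 * (∫ s in Iic (-k₀), |deriv f s|) + 2 * M * (3 + log (3 * (κ + 1)) + π)
  refine ⟨max C 1, lt_max_of_lt_right one_pos, fun k hk hcone hk₁ => ?_⟩
  have hcone' : ‖k - ((-k₀ : ℝ) : ℂ)‖ ≤ (κ + 1) * k.im := by
    simpa using Complex.norm_le_mul_im_of_abs_re_le (ζ := k + k₀) (by simpa using hk.le)
      (by simpa using hcone)
  have hk₁' : ‖k - ((-k₀ : ℝ) : ℂ)‖ ≤ 1 / 2 := by simpa using hk₁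
  have hMabs : ∀ s ∈ Icc (-k₀ - 1) (-k₀), |deriv f s| ≤ M := fun s hs => by simpa using hM s hs
  have hint := integrableOn_log_sub_log_mul hfi' hMabs hk hcone' hk₁'
  have hbound := integral_norm_log_sub_log_mul_le hfi' hMabs hk hcone' hk₁'
  simp only [Complex.ofReal_neg, sub_neg_eq_add, sub_mul] at hint hbound
  have hprefactor : ‖1 / (2 * (π : ℂ) * Complex.I)‖ ≤ 1 := by
    rw [show ‖1 / (2 * (π : ℂ) * Complex.I)‖ = (2 * π)⁻¹ by simp [abs_of_pos pi_pos]]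
    exact inv_le_one_of_one_le₀ (by linarith [pi_gt_three])
  rw [hχ, hχ, ← mul_sub, norm_mul]
  refine (mul_le_mul hprefactor (norm_integral_sub_integral_le hint) (norm_nonneg _)
    zero_le_one).trans ?_
  rw [one_mul]
  exact hbound.trans (by gcongr; exact le_max_left _ _)

/-- Modulus-of-continuity estimate for the logarithmic Cauchy integral `χ`
near the endpoint `-k₀` of the contour, within a nontangential cone in the
upper half-plane. -/
theorem chi_endpoint_estimate (k₀ : ℝ) (hk₀ : 0 < k₀) (f : ℝ → ℝ)
    (hf : ContDiff ℝ 1 f)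
    (hfi : IntegrableOn f (Set.Iic (-k₀)))
    (hfi' : IntegrableOn (deriv f) (Set.Iic (-k₀)))
    (χ : ℂ → ℂ)
    (hχ : ∀ k : ℂ, χ k = (1 / (2 * Real.pi * Complex.I)) *
      ∫ s in Set.Iic (-k₀), Complex.log (k - s) * ((deriv f s : ℝ) : ℂ)) :
    ∀ κ : ℝ, 0 < κ → ∃ C : ℝ, 0 < C ∧ ∀ k : ℂ, 0 < k.im →
      |k.re + k₀| ≤ κ * k.im → ‖k + k₀‖ ≤ 1 / 2 →
      ‖χ k - χ (-(k₀ : ℂ))‖ ≤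
        C * ‖k + k₀‖ *
          (1 + |Real.log (‖k + k₀‖)|) :=
  chi_endpoint_estimate_general k₀ f hf hfi' χ hχ
end
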